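/- arXiv:2303.16596 — 5 statements merged into one kernel-verified Lean document; each statement's English description precedes it below -/
import Mathlib

section
/- For all natural numbers k, l ≥ 1 and all real s ∈ (0,1), we have (k+l)·s^(k+l-1) − k·s^(k-1) − l < 0. -/
theorem stmt_0 (k l : ℕ) (hk : 1 ≤ k) (hl : 1 ≤ l) (s : ℝ) (hs0 : 0 < s) (hs1 : s < 1) :
    ((k + l : ℕ) : ℝ) * s ^ (k + l - 1) - (k : ℝ) * s ^ (k - 1) - (l : ℝ) < 0 := by
  have hlt : s ^ (k + l - 1) < 1 := pow_lt_one₀ hs0.le hs1 (by omega)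
  have hle : s ^ (k + l - 1) ≤ s ^ (k - 1) := pow_le_pow_of_le_one hs0.le hs1.le (by omega)
  have hl_pos : (0 : ℝ) < l := by exact_mod_cast hl
  calc ((k + l : ℕ) : ℝ) * s ^ (k + l - 1) - (k : ℝ) * s ^ (k - 1) - (l : ℝ)
      = k * (s ^ (k + l - 1) - s ^ (k - 1)) + l * (s ^ (k + l - 1) - 1) := by push_cast; ring
    _ < 0 :=
      add_neg_of_nonpos_of_neg (mul_nonpos_of_nonneg_of_nonpos k.cast_nonneg (sub_nonpos.2 hle))
        (mul_neg_of_pos_of_neg hl_pos (sub_neg.2 hlt))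
end

section
/- Let D be a positive-integer-valued random variable with finite mean and probability mass function (p_j)_{j≥1}, let (r_j)_{j≥1} be a sequence in [0,1] with E[r_D] = α, and let η ∈ (0,1] satisfy E[D(1−r_D)η^(D−1)] = E[D(η − r_D)]. Define ρ(r) = 1 − α − 2E[D r_D]η − Σ_{i≥1} p_i(1−r_i)η^i. Then ρ(r) ≤ 1 − α − 2(E[D r_D])²/E[D]. -/
/-!
The left side of the extinction equation is nonnegative, so `E[D r_D] ≤ η E[D]`. Hence
`E[D r_D]² / E[D] ≤ η E[D r_D]`, and dropping the nonnegative series `Σ pᵢ (1 - rᵢ) ηⁱ` from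
`ρ(r)` gives the bound.
-/

lemma summable_mul_of_mem_Icc {w r : ℕ → ℝ} (hw : ∀ j, 0 ≤ w j) (hws : Summable w)
    (hr : ∀ j, r j ∈ Set.Icc (0 : ℝ) 1) : Summable fun j => w j * r j :=
  hws.of_nonneg_of_le (fun j => mul_nonneg (hw j) (hr j).1)
    fun j => mul_le_of_le_one_right (hw j) (hr j).2

lemma tsum_mul_le_mul_tsum_of_nonneg {w r : ℕ → ℝ} (η : ℝ) (hws : Summable w)
    (hwr : Summable fun j => w j * r j) (h : 0 ≤ ∑' j, w j * (η - r j)) :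
    ∑' j, w j * r j ≤ η * ∑' j, w j := by
  have hsplit : ∑' j, w j * (η - r j) = η * ∑' j, w j - ∑' j, w j * r j := by
    simp only [mul_sub]
    rw [(hws.mul_right η).tsum_sub hwr, tsum_mul_right, mul_comm]
  linarith

lemma sq_div_le_mul_of_le_mul {M μ η : ℝ} (hM : 0 ≤ M) (hη : 0 ≤ η) (h : M ≤ η * μ) :
    M ^ 2 / μ ≤ M * η := by
  rcases le_or_gt μ 0 with hμ | hμ
  · exact (div_nonpos_of_nonneg_of_nonpos (sq_nonneg M) hμ).trans (mul_nonneg hM hη)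
  · rw [div_le_iff₀ hμ]
    nlinarith

theorem stmt_4_general (p : ℕ → ℝ) (r : ℕ → ℝ) (α : ℝ)
    (hp : ∀ j, 0 ≤ p j)
    (hμ : Summable fun j : ℕ => (j : ℝ) * p j)
    (hr : ∀ j, r j ∈ Set.Icc (0 : ℝ) 1)
    (η : ℝ) (hη0 : 0 < η)
    (hfix : (∑' j : ℕ, (j : ℝ) * p j * (1 - r j) * η ^ (j - 1))
      = ∑' j : ℕ, (j : ℝ) * p j * (η - r j))
    (ρ : ℝ)
    (hρ : ρ = 1 - α - 2 * (∑' j : ℕ, (j : ℝ) * p j * r j) * η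
      - ∑' i, p i * (1 - r i) * η ^ i) :
    ρ ≤ 1 - α - 2 * (∑' j : ℕ, (j : ℝ) * p j * r j) ^ 2 / (∑' j : ℕ, (j : ℝ) * p j) := by
  have hw : ∀ j : ℕ, 0 ≤ (j : ℝ) * p j := fun j => mul_nonneg j.cast_nonneg (hp j)
  have hr1 : ∀ j, 0 ≤ 1 - r j := fun j => sub_nonneg.2 (hr j).2
  have hfix_nonneg : 0 ≤ ∑' j : ℕ, (j : ℝ) * p j * (η - r j) :=
    hfix ▸ tsum_nonneg fun j => by have := hw j; have := hr1 j; positivity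
  have hM_le : ∑' j : ℕ, (j : ℝ) * p j * r j ≤ η * ∑' j : ℕ, (j : ℝ) * p j :=
    tsum_mul_le_mul_tsum_of_nonneg η hμ (summable_mul_of_mem_Icc hw hμ hr) hfix_nonneg
  have hM_nonneg : 0 ≤ ∑' j : ℕ, (j : ℝ) * p j * r j :=
    tsum_nonneg fun j => mul_nonneg (hw j) (hr j).1
  have hS_nonneg : 0 ≤ ∑' i, p i * (1 - r i) * η ^ i :=
    tsum_nonneg fun i => by have := hp i; have := hr1 i; positivity
  have hdiv := sq_div_le_mul_of_le_mul hM_nonneg hη0.le hM_le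
  rw [hρ, mul_div_assoc]
  linarith

/-- Upper bound `ρ(r) ≤ 1 - α - 2 E[D r_D]² / E[D]`. -/
theorem stmt_4 (p : ℕ → ℝ) (r : ℕ → ℝ) (α : ℝ)
    (hp : ∀ j, 0 ≤ p j) (hp0 : p 0 = 0) (hpsum : ∑' j, p j = 1)
    (hμ : Summable fun j : ℕ => (j : ℝ) * p j)
    (hr : ∀ j, r j ∈ Set.Icc (0 : ℝ) 1)
    (hα : ∑' j, p j * r j = α)
    (η : ℝ) (hη0 : 0 < η) (hη1 : η ≤ 1)
    (hfix : (∑' j : ℕ, (j : ℝ) * p j * (1 - r j) * η ^ (j - 1))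
      = ∑' j : ℕ, (j : ℝ) * p j * (η - r j))
    (ρ : ℝ)
    (hρ : ρ = 1 - α - 2 * (∑' j : ℕ, (j : ℝ) * p j * r j) * η
      - ∑' i, p i * (1 - r i) * η ^ i) :
    ρ ≤ 1 - α - 2 * (∑' j : ℕ, (j : ℝ) * p j * r j) ^ 2 / (∑' j : ℕ, (j : ℝ) * p j) :=
  stmt_4_general p r α hp hμ hr η hη0 hfix ρ hρ
end

section
/- Let D be a positive-integer-valued random variable with finite mean E[D], let (r_j)_{j≥1} ⊂ [0,1], and let η ∈ (0,1] satisfy the half-edge extinction equation. Define the edge proportion e(r) = (E[D]/2)(1 − η²) − E[D r_D](1 − η). Then 0 ≤ e(r) ≤ E[D(1−r_D)]²/(2E[D]). -/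
/-!
Since the first series in the half-edge equation is nonnegative, `A := E[D r_D] ≤ η μ` with
`μ := E[D]`. Then `e = (1 - η)(η μ - A) + μ (1 - η)² / 2 ≥ 0`, and the identity
`2 μ e + (η μ - A)² = (μ - A)² = E[D(1 - r_D)]²` gives the upper bound.
-/

open Set

noncomputable def edgeProportion (μ A η : ℝ) : ℝ := μ / 2 * (1 - η ^ 2) - A * (1 - η)

lemma edgeProportion_nonneg {μ A η : ℝ} (hμ : 0 ≤ μ) (hη : η ≤ 1) (hA : A ≤ η * μ) :
    0 ≤ edgeProportion μ A η := by
  have hdecomp : edgeProportion μ A η = (1 - η) * (η * μ - A) + μ * (1 - η) ^ 2 / 2 := by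
    unfold edgeProportion; ring
  rw [hdecomp]
  have := mul_nonneg (sub_nonneg.2 hη) (sub_nonneg.2 hA)
  positivity

lemma two_mul_edgeProportion_add_sq (μ A η : ℝ) :
    2 * μ * edgeProportion μ A η + (η * μ - A) ^ 2 = (μ - A) ^ 2 := by
  unfold edgeProportion; ring

lemma edgeProportion_le {μ A η : ℝ} (hμ : 0 ≤ μ) (hA0 : 0 ≤ A) (hA : A ≤ η * μ) :
    edgeProportion μ A η ≤ (μ - A) ^ 2 / (2 * μ) := by
  rcases hμ.eq_or_lt with rfl | hμ
  · obtain rfl : A = 0 := by linarith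
    simp [edgeProportion]
  · rw [le_div_iff₀ (by positivity)]
    nlinarith [two_mul_edgeProportion_add_sq μ A η, sq_nonneg (η * μ - A)]

section Series

variable {f r : ℕ → ℝ}

lemma tsum_mul_one_sub (hf : Summable f) (hf0 : ∀ j, 0 ≤ f j) (hr : ∀ j, r j ∈ Icc (0 : ℝ) 1) :
    ∑' j, f j * (1 - r j) = ∑' j, f j - ∑' j, f j * r j := by
  have hfr : Summable fun j => f j * r j :=
    hf.of_nonneg_of_le (fun j => mul_nonneg (hf0 j) (hr j).1)
      (fun j => mul_le_of_le_one_right (hf0 j) (hr j).2)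
  simp_rw [mul_one_sub]
  exact hf.tsum_sub hfr

lemma tsum_mul_le_of_halfEdge_eq {η : ℝ} (hf0 : ∀ j, 0 ≤ f j) (hr : ∀ j, r j ≤ 1) (hη : 0 ≤ η)
    (hfix : ∑' j, f j * (1 - r j) * η ^ (j - 1) + ∑' j, f j * r j = η * ∑' j, f j) :
    ∑' j, f j * r j ≤ η * ∑' j, f j := by
  have hS : 0 ≤ ∑' j, f j * (1 - r j) * η ^ (j - 1) :=
    tsum_nonneg fun j => by have := sub_nonneg.2 (hr j); have := hf0 j; positivity
  linarith

end Series

theorem stmt_7_general (p : ℕ → ℝ) (r : ℕ → ℝ)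
    (hp : ∀ j, 0 ≤ p j)
    (hμ : Summable fun j : ℕ => (j : ℝ) * p j)
    (hr : ∀ j, r j ∈ Set.Icc (0 : ℝ) 1)
    (η : ℝ) (hη0 : 0 < η) (hη1 : η ≤ 1)
    (hfix : (∑' j : ℕ, (j : ℝ) * p j * (1 - r j) * η ^ (j - 1)) + (∑' j : ℕ, (j : ℝ) * p j * r j)
      = η * ∑' j : ℕ, (j : ℝ) * p j)
    (e : ℝ)
    (he : e = (∑' j : ℕ, (j : ℝ) * p j) / 2 * (1 - η ^ 2)
      - (∑' j : ℕ, (j : ℝ) * p j * r j) * (1 - η)) :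
    0 ≤ e ∧ e ≤ (∑' j : ℕ, (j : ℝ) * p j * (1 - r j)) ^ 2 / (2 * ∑' j : ℕ, (j : ℝ) * p j) := by
  have hf0 : ∀ j : ℕ, 0 ≤ (j : ℝ) * p j := fun j => mul_nonneg j.cast_nonneg (hp j)
  have hA : ∑' j : ℕ, (j : ℝ) * p j * r j ≤ η * ∑' j : ℕ, (j : ℝ) * p j :=
    tsum_mul_le_of_halfEdge_eq hf0 (fun j => (hr j).2) hη0.le hfix
  have hμ0 : 0 ≤ ∑' j : ℕ, (j : ℝ) * p j := tsum_nonneg hf0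
  have hA0 : 0 ≤ ∑' j : ℕ, (j : ℝ) * p j * r j := tsum_nonneg fun j => mul_nonneg (hf0 j) (hr j).1
  rw [he, tsum_mul_one_sub hμ hf0 hr]
  exact ⟨edgeProportion_nonneg hμ0 hη1 hA, edgeProportion_le hμ0 hA0 hA⟩

/-- Bounds on the limiting edge proportion:
`0 ≤ e(r) ≤ E[D(1-r_D)]²/(2 E[D])`. -/
theorem stmt_7 (p : ℕ → ℝ) (r : ℕ → ℝ)
    (hp : ∀ j, 0 ≤ p j) (hp0 : p 0 = 0) (hpsum : ∑' j, p j = 1)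
    (hμ : Summable fun j : ℕ => (j : ℝ) * p j)
    (hr : ∀ j, r j ∈ Set.Icc (0 : ℝ) 1)
    (η : ℝ) (hη0 : 0 < η) (hη1 : η ≤ 1)
    (hfix : (∑' j : ℕ, (j : ℝ) * p j * (1 - r j) * η ^ (j - 1)) + (∑' j : ℕ, (j : ℝ) * p j * r j)
      = η * ∑' j : ℕ, (j : ℝ) * p j)
    (e : ℝ)
    (he : e = (∑' j : ℕ, (j : ℝ) * p j) / 2 * (1 - η ^ 2)
      - (∑' j : ℕ, (j : ℝ) * p j * r j) * (1 - η)) :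
    0 ≤ e ∧ e ≤ (∑' j : ℕ, (j : ℝ) * p j * (1 - r j)) ^ 2 / (2 * ∑' j : ℕ, (j : ℝ) * p j) :=
  stmt_7_general p r hp hμ hr η hη0 hη1 hfix e he
end

section
/- Let g: [0,1] → ℝ be the probability generating function of a positive-integer-valued random variable D̃ with p̃_1 > 0, and let c > 0. If η ∈ (0,1) satisfies g'(η) = c·η and also g'(1) = c (i.e. η and 1 are both roots of h(x) = g'(x) − cx), then g''(η) < c. -/
/-!
With `b n = (n + 1) q (n + 1)` we have `g'(x) = ∑ bₙ xⁿ`, and the two equations `g'(1) = c`,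
`g'(η) = cη` give `∑ bₙ (1 - ηⁿ) = c (1 - η)`, i.e. `∑ bₙ (1 + η + ⋯ + ηⁿ⁻¹) = c`.
Instead of Rolle's theorem we compare coefficients: `n ηⁿ⁻¹ ≤ 1 + η + ⋯ + ηⁿ⁻¹`, strictly for
`n ≥ 2`, and some `bₙ` with `n ≥ 2` is positive, since `b₀ + b₁ x = c x` at both `x = η` and `x = 1`
would force `b₀ = 0`. Hence `g''(η) = ∑ n bₙ ηⁿ⁻¹ < c`.
-/

open Finset

lemma tsum_succ_eq_tsum_of_apply_zero {M : Type*} [AddCommMonoid M] [TopologicalSpace M]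
    {f : ℕ → M} (hf : f 0 = 0) : ∑' n, f (n + 1) = ∑' n, f n :=
  Nat.succ_injective.tsum_eq fun n hn =>
    (Nat.exists_eq_add_one_of_ne_zero (by rintro rfl; exact hn hf)).imp fun _ => Eq.symm

section GeomSum

variable {R : Type*} [CommSemiring R] [PartialOrder R] [IsStrictOrderedRing R] {x : R}

lemma nat_mul_pow_pred_le_geom_sum (hx0 : 0 ≤ x) (hx1 : x ≤ 1) (n : ℕ) :
    n * x ^ (n - 1) ≤ ∑ i ∈ range n, x ^ i := by
  calc (n : R) * x ^ (n - 1) = ∑ _i ∈ range n, x ^ (n - 1) := by simp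
    _ ≤ ∑ i ∈ range n, x ^ i := sum_le_sum fun i hi =>
      pow_le_pow_of_le_one hx0 hx1 (Nat.le_sub_one_of_lt (mem_range.1 hi))

lemma nat_mul_pow_pred_lt_geom_sum (hx0 : 0 ≤ x) (hx1 : x < 1) {n : ℕ} (hn : 2 ≤ n) :
    n * x ^ (n - 1) < ∑ i ∈ range n, x ^ i := by
  calc (n : R) * x ^ (n - 1) = ∑ _i ∈ range n, x ^ (n - 1) := by simp
    _ < ∑ i ∈ range n, x ^ i := by
      refine sum_lt_sum (fun i hi => pow_le_pow_of_le_one hx0 hx1.le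
        (Nat.le_sub_one_of_lt (mem_range.1 hi))) ⟨0, mem_range.2 (by omega), ?_⟩
      simpa using pow_lt_one₀ hx0 hx1 (show n - 1 ≠ 0 by omega)

end GeomSum

lemma HasSum.mul_geom_sum {K : Type*} [Field K] [TopologicalSpace K] [IsTopologicalRing K]
    {b : ℕ → K} {x c d : K} (hx : x ≠ 1) (hb : HasSum b c)
    (hbx : HasSum (fun n => b n * x ^ n) d) :
    HasSum (fun n => b n * ∑ i ∈ range n, x ^ i) ((c - d) / (1 - x)) := by
  convert (hb.sub hbx).div_const (1 - x) using 2 with n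
  rw [eq_div_iff (sub_ne_zero.2 hx.symm), mul_assoc, geom_sum_mul_neg]
  ring

section PowerSeries

variable {b : ℕ → ℝ} {x c : ℝ}

lemma exists_two_le_pos_of_hasSum (hb : ∀ n, 0 ≤ b n) (hb0 : 0 < b 0) (hx1 : x < 1)
    (h1 : HasSum b c) (hx : HasSum (fun n => b n * x ^ n) (c * x)) :
    ∃ n, 2 ≤ n ∧ 0 < b n := by
  by_contra! h
  have hz : ∀ n ∉ range 2, b n = 0 := fun n hn =>
    le_antisymm (h n (by simp at hn; omega)) (hb n)
  have hc1 : c = b 0 + b 1 := by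
    simpa [sum_range_succ] using h1.unique (hasSum_sum_of_ne_finset_zero hz)
  have hcx : c * x = b 0 + b 1 * x := by
    simpa [sum_range_succ] using
      hx.unique (hasSum_sum_of_ne_finset_zero (s := range 2) fun n hn => by simp [hz n hn])
  nlinarith

theorem tsum_nat_mul_pow_pred_lt_of_hasSum (hb : ∀ n, 0 ≤ b n) (hb0 : 0 < b 0) (hx0 : 0 ≤ x)
    (hx1 : x < 1) (h1 : HasSum b c) (hx : HasSum (fun n => b n * x ^ n) (c * x)) :
    ∑' n : ℕ, n * b n * x ^ (n - 1) < c := by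
  have hG := h1.mul_geom_sum hx1.ne hx
  rw [show (c - c * x) / (1 - x) = c by field_simp [sub_ne_zero.2 hx1.ne']] at hG
  obtain ⟨m, hm, hbm⟩ := exists_two_le_pos_of_hasSum hb hb0 hx1 h1 hx
  rw [← hG.tsum_eq]
  refine Summable.tsum_lt_tsum_of_nonneg (i := m)
    (fun n => mul_nonneg (mul_nonneg n.cast_nonneg (hb n)) (pow_nonneg hx0 _))
    (fun n => ?_) ?_ hG.summable
  · rw [mul_comm (n : ℝ), mul_assoc]
    exact mul_le_mul_of_nonneg_left (nat_mul_pow_pred_le_geom_sum hx0 hx1.le n) (hb n)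
  · rw [mul_comm (m : ℝ), mul_assoc]
    exact mul_lt_mul_of_pos_left (nat_mul_pow_pred_lt_geom_sum hx0 hx1 hm) hbm

end PowerSeries

theorem stmt_10_general (q : ℕ → ℝ) (c : ℝ)
    (hq : ∀ j, 0 ≤ q j) (hq1 : 0 < q 1)
    (hc : 0 < c)
    (η : ℝ) (hη0 : 0 < η) (hη1 : η < 1)
    (hfixη : (∑' j : ℕ, (j : ℝ) * q j * η ^ (j - 1)) = c * η)
    (hfix1 : (∑' j : ℕ, (j : ℝ) * q j) = c) :
    (∑' j : ℕ, (j : ℝ) * ((j : ℝ) - 1) * q j * η ^ (j - 2)) < c := by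
  set b : ℕ → ℝ := fun n => ((n + 1 : ℕ) : ℝ) * q (n + 1)
  have hb : ∀ n, 0 ≤ b n := fun n => mul_nonneg n.succ.cast_nonneg (hq _)
  have hbsum : Summable b := by
    refine (summable_nat_add_iff (f := fun j : ℕ => (j : ℝ) * q j) 1).2 ?_
    by_contra h
    exact hc.ne (tsum_eq_zero_of_not_summable h ▸ hfix1)
  have h1 : HasSum b c := by
    rw [hbsum.hasSum_iff, ← hfix1]
    exact tsum_succ_eq_tsum_of_apply_zero (f := fun j : ℕ => (j : ℝ) * q j) (by simp)
  have hbη : HasSum (fun n => b n * η ^ n) (c * η) := by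
    have hs : Summable fun n => b n * η ^ n :=
      hbsum.of_nonneg_of_le (fun n => mul_nonneg (hb n) (pow_nonneg hη0.le n))
        fun n => mul_le_of_le_one_right (hb n) (pow_le_one₀ hη0.le hη1.le)
    rw [hs.hasSum_iff, ← hfixη,
      ← tsum_succ_eq_tsum_of_apply_zero (f := fun j : ℕ => (j : ℝ) * q j * η ^ (j - 1)) (by simp)]
    rfl
  calc (∑' j : ℕ, (j : ℝ) * ((j : ℝ) - 1) * q j * η ^ (j - 2))
      = ∑' n : ℕ, n * b n * η ^ (n - 1) := by
        rw [← tsum_succ_eq_tsum_of_apply_zero (by simp)]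
        congr 1 with n
        rw [show n + 1 - 2 = n - 1 by omega]
        simp only [b, Nat.cast_succ, add_sub_cancel_right]
        ring
    _ < c := tsum_nat_mul_pow_pred_lt_of_hasSum hb (by simpa [b] using hq1) hη0.le hη1 h1 hbη

/-- If `η ∈ (0,1)` satisfies `g'(η) = cη` and `g'(1) = c`, then `g''(η) < c`. -/
theorem stmt_10 (q : ℕ → ℝ) (c : ℝ)
    (hq : ∀ j, 0 ≤ q j) (hq0 : q 0 = 0) (hqsum : ∑' j, q j = 1) (hq1 : 0 < q 1)
    (hμ2 : Summable fun j : ℕ => (j : ℝ) ^ 2 * q j)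
    (hc : 0 < c)
    (η : ℝ) (hη0 : 0 < η) (hη1 : η < 1)
    (hfixη : (∑' j : ℕ, (j : ℝ) * q j * η ^ (j - 1)) = c * η)
    (hfix1 : (∑' j : ℕ, (j : ℝ) * q j) = c) :
    (∑' j : ℕ, (j : ℝ) * ((j : ℝ) - 1) * q j * η ^ (j - 2)) < c :=
  stmt_10_general q c hq hq1 hc η hη0 hη1 hfixη hfix1
end

section
/- For all natural numbers k ≥ 1, l ≥ 1 and real x ∈ (0,1): k·x^(k-2) − (k+l)·x^(k+l-2) + l > 0 (interpreting x^(k-2) as x^{k-2} with the convention x^{-1} = 1/x when k = 1). -/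
/-! With `a = x^(k-2)` and `y = x^l`, the expression is `k a (1 - y) + l (1 - a y)`: the first term
is positive since `y < 1`, the second nonnegative since `a y = x^(k+l-2)` is a natural power of `x`. -/

lemma weighted_sub_mul_pos {k l a y : ℝ} (hk : 0 < k) (hl : 0 ≤ l) (ha : 0 < a) (hy : y < 1)
    (hay : a * y ≤ 1) : 0 < k * a - (k + l) * (a * y) + l := by
  have hfirst : 0 < k * a * (1 - y) := by have := sub_pos.2 hy; positivity
  have hsecond : 0 ≤ l * (1 - a * y) := mul_nonneg hl (sub_nonneg.2 hay)
  linarith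

lemma zpow_sub_two_add_natCast {G₀ : Type*} [GroupWithZero G₀] {x : G₀} (hx : x ≠ 0) (k l : ℕ) :
    x ^ ((k : ℤ) + (l : ℤ) - 2) = x ^ ((k : ℤ) - 2) * x ^ l := by
  rw [← zpow_natCast x l, ← zpow_add₀ hx]
  ring_nf

/-- For `k, l ≥ 1` and `x ∈ (0,1)`: `k x^(k-2) - (k+l) x^(k+l-2) + l > 0`,
with integer powers (so `x^(-1) = 1/x` when `k = 1`). -/
theorem stmt_14 (k l : ℕ) (hk : 1 ≤ k) (hl : 1 ≤ l) (x : ℝ) (hx0 : 0 < x) (hx1 : x < 1) :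
    (k : ℝ) * x ^ ((k : ℤ) - 2) - ((k + l : ℕ) : ℝ) * x ^ ((k : ℤ) + (l : ℤ) - 2) + (l : ℝ) > 0 := by
  have hpow := zpow_sub_two_add_natCast hx0.ne' k l
  have hy : x ^ l < 1 := pow_lt_one₀ hx0.le hx1 (by omega)
  have hay : x ^ ((k : ℤ) - 2) * x ^ l ≤ 1 := by
    rw [← hpow, show (k : ℤ) + (l : ℤ) - 2 = ((k + l - 2 : ℕ) : ℤ) by omega, zpow_natCast]
    exact pow_le_one₀ hx0.le hx1.le
  rw [hpow, Nat.cast_add]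
  exact weighted_sub_mul_pos (Nat.cast_pos.2 hk) l.cast_nonneg (zpow_pos hx0 _) hy hay
end
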